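/- arXiv:2004.06834 — 2 statements merged into one kernel-verified Lean document; each statement's English description precedes it below -/
import Mathlib

section
/- Let k > ℓ ≥ 1 be integers, let R₁ ∈ ℤ^{m×m} and R₂ ∈ ℤ^{n×n} be symmetric, and let τ_{R₁}^{(k)} be the m-qubit QFD gate and τ_{R₂}^{(ℓ)} the n-qubit QFD gate. Then the Kronecker product satisfies τ_{R₁}^{(k)} ⊗ τ_{R₂}^{(ℓ)} = τ_R^{(k)}, the (m+n)-qubit QFD gate with symmetric matrix R = [[R₁, 0],[0, 2^{k−ℓ} R₂]]. -/
open Matrix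

noncomputable section

/-- `ξ_ℓ = e^{2πi/2^ℓ}`. -/
def xi (ℓ : ℕ) : ℂ := Complex.exp (2 * (Real.pi : ℂ) * Complex.I / (2 ^ ℓ))

/-- The 0/1 integer representative of a binary vector. -/
def intVec {ι : Type*} (v : ι → ZMod 2) : ι → ℤ := fun i => ((v i).val : ℤ)

/-- The quadratic form diagonal (QFD) gate `τ_R^{(ℓ)}` on qubits indexed by `ι`,
with `(v,v)` entry `ξ_ℓ^{v R vᵀ}`. -/
def tauR {ι : Type*} [Fintype ι] [DecidableEq ι] (ℓ : ℕ) (R : Matrix ι ι ℤ) :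
    Matrix (ι → ZMod 2) (ι → ZMod 2) ℂ :=
  Matrix.diagonal fun v => xi ℓ ^ (∑ i, intVec v i * Matrix.mulVec R (intVec v) i)

lemma xi_ne_zero (ℓ : ℕ) : xi ℓ ≠ 0 := Complex.exp_ne_zero _

lemma xi_pow_key {k ℓ : ℕ} (h : ℓ ≤ k) : xi k ^ ((2:ℤ) ^ (k - ℓ)) = xi ℓ := by
  have h1 : ((2:ℤ) ^ (k - ℓ)) = ((2 ^ (k - ℓ) : ℕ) : ℤ) := by push_cast; ring
  rw [h1, zpow_natCast, xi, xi, ← Complex.exp_nat_mul]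
  congr 1
  have h2 : (2:ℂ) ^ k = 2 ^ ℓ * 2 ^ (k - ℓ) := by
    rw [← pow_add, Nat.add_sub_cancel' h]
  have hne : (2:ℂ) ^ ℓ ≠ 0 := pow_ne_zero _ two_ne_zero
  have hne2 : (2:ℂ) ^ (k - ℓ) ≠ 0 := pow_ne_zero _ two_ne_zero
  rw [h2]
  push_cast
  field_simp

lemma intVec_elim {m n : ℕ} (v : Fin m → ZMod 2) (w : Fin n → ZMod 2) :
    intVec (Sum.elim v w) = Sum.elim (intVec v) (intVec w) := by
  funext i; cases i <;> rfl

/-- The Kronecker product of an `m`-qubit level-`k` QFD gate and an `n`-qubit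
level-`ℓ` QFD gate (`ℓ < k`) is the `(m+n)`-qubit level-`k` QFD gate with
symmetric matrix `[[R₁, 0],[0, 2^{k−ℓ} R₂]]`. -/
theorem qfd_kronecker (m n k ℓ : ℕ) (hℓ : 1 ≤ ℓ) (hk : ℓ < k)
    (R₁ : Matrix (Fin m) (Fin m) ℤ) (R₂ : Matrix (Fin n) (Fin n) ℤ)
    (h₁ : R₁.IsSymm) (h₂ : R₂.IsSymm) :
    Matrix.kroneckerMap (· * ·) (tauR k R₁) (tauR ℓ R₂) =
      Matrix.reindex (Equiv.sumArrowEquivProdArrow (Fin m) (Fin n) (ZMod 2))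
        (Equiv.sumArrowEquivProdArrow (Fin m) (Fin n) (ZMod 2))
        (tauR k (Matrix.fromBlocks R₁ 0 0 ((2 ^ (k - ℓ) : ℤ) • R₂))) := by
  ext ⟨v, w⟩ ⟨v', w'⟩
  rw [Matrix.kroneckerMap_apply, Matrix.reindex_apply, Matrix.submatrix_apply]
  have hsymm : (Equiv.sumArrowEquivProdArrow (Fin m) (Fin n) (ZMod 2)).symm (v, w)
      = Sum.elim v w := rfl
  have hsymm' : (Equiv.sumArrowEquivProdArrow (Fin m) (Fin n) (ZMod 2)).symm (v', w')
      = Sum.elim v' w' := rfl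
  rw [hsymm, hsymm']
  unfold tauR
  by_cases hv : v = v'
  · by_cases hw : w = w'
    · subst hv; subst hw
      rw [Matrix.diagonal_apply_eq, Matrix.diagonal_apply_eq, Matrix.diagonal_apply_eq]
      rw [intVec_elim, Matrix.fromBlocks_mulVec]
      simp only [Matrix.zero_mulVec, add_zero, zero_add, Fintype.sum_sum_type,
        Sum.elim_inl, Sum.elim_inr, Matrix.smul_mulVec, Pi.smul_apply,
        smul_eq_mul, Sum.elim_comp_inl, Sum.elim_comp_inr]
      have hrw : ∑ j : Fin n, intVec w j * (2 ^ (k - ℓ) * Matrix.mulVec R₂ (intVec w) j)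
          = (2:ℤ) ^ (k - ℓ) * ∑ j : Fin n, intVec w j * Matrix.mulVec R₂ (intVec w) j := by
        rw [Finset.mul_sum]; congr 1; funext j; ring
      rw [hrw, zpow_add₀ (xi_ne_zero k), _root_.zpow_mul, xi_pow_key hk.le]
    · have hne : Sum.elim v w ≠ Sum.elim v' w' := by
        intro h; exact hw (funext fun j => congrFun h (Sum.inr j))
      rw [Matrix.diagonal_apply_ne _ hw, Matrix.diagonal_apply_ne _ hne, mul_zero]
  · have hne : Sum.elim v w ≠ Sum.elim v' w' := by
      intro h; exact hv (funext fun j => congrFun h (Sum.inl j))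
    rw [Matrix.diagonal_apply_ne _ hv, Matrix.diagonal_apply_ne _ hne, zero_mul]

end
end

section
/- Let m and r be positive integers with r dividing m and 2 ≤ r ≤ m/2. Let f : F₂^m → F₂ be a function whose multilinear (algebraic normal form) expansion f = Σ_{d ∈ F₂^m} a_d x^d, with a_d ∈ F₂ and x^d = Π_{i : d_i = 1} x_i, satisfies a_d = 0 whenever w_H(d) > r (i.e. f has degree at most r, so its evaluation vector lies in the Reed–Muller code RM(r,m)). Let P be the set of all partitions of {1,…,m} into m/r blocks of size r, and for a block B ⊆ {1,…,m} let χ_B ∈ F₂^m denote its indicator vector. Define Q(f) := Σ_{π ∈ P} Π_{B ∈ π} a_{χ_B} ∈ F₂ and let Q̂(f) ∈ {0,1} be its integer lift. Then the Hamming weight of the evaluation vector of f satisfies |{ x ∈ F₂^m : f(x) = 1 }| ≡ 2^{m/r − 1} · Q̂(f) (mod 2^{m/r}). -/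
open scoped Classical

noncomputable section

/-- Hamming weight of a binary vector. -/
def wHam {m : ℕ} (d : Fin m → ZMod 2) : ℕ := ∑ i, (d i).val

/-- `π` is a partition of `{1,…,m}` into blocks of size `r`: a collection of pairwise
disjoint `r`-element subsets covering everything. -/
def IsRPartition (m r : ℕ) (π : Finset (Finset (Fin m))) : Prop :=
  (∀ B ∈ π, B.card = r) ∧
  (∀ B ∈ π, ∀ B' ∈ π, B ≠ B' → Disjoint B B') ∧
  (∀ i : Fin m, ∃ B ∈ π, i ∈ B)

/-- `Q(f) = Σ_{π ∈ P} Π_{B ∈ π} a_{χ_B} ∈ F₂`, the sum over all partitions of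
`{1,…,m}` into `m/r` blocks of size `r` of the products of the ANF coefficients of
`f` at the blocks' indicator vectors. -/
def Qcoef (m r : ℕ) (a : (Fin m → ZMod 2) → ZMod 2) : ZMod 2 :=
  ∑ π : Finset (Finset (Fin m)),
    if IsRPartition m r π then
      ∏ B ∈ π, a (fun i => if i ∈ B then (1 : ZMod 2) else 0)
    else 0

/-! ### Auxiliary lemmas -/

lemma RMzmod2_cases (u : ZMod 2) : u = 0 ∨ u = 1 := by revert u; decide

lemma RMsign_add (u v : ZMod 2) : ((-1:ℤ))^(u+v).val = (-1)^u.val * (-1)^v.val := by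
  revert u v; decide

lemma RMsign_sum {ι : Type*} (s : Finset ι) (g : ι → ZMod 2) :
    ((-1:ℤ))^((∑ i ∈ s, g i).val) = ∏ i ∈ s, ((-1:ℤ))^((g i).val) := by
  induction s using Finset.cons_induction with
  | empty => simp
  | cons i s hi ih => rw [Finset.sum_cons, Finset.prod_cons, RMsign_add, ih]

lemma RMprod_one_iff {ι : Type*} (s : Finset ι) (g : ι → ZMod 2) :
    (∏ i ∈ s, g i) = 1 ↔ ∀ i ∈ s, g i = 1 := by
  constructor
  · intro h i hi
    rcases RMzmod2_cases (g i) with h0 | h1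
    · rw [Finset.prod_eq_zero hi h0] at h; exact absurd h (by decide)
    · exact h1
  · exact Finset.prod_eq_one

/-- Counting: number of x with x=1 on T is 2^(m - |T|). -/
lemma RMcard_ones {m : ℕ} (T : Finset (Fin m)) :
    ((Finset.univ.filter (fun x : Fin m → ZMod 2 => ∀ i ∈ T, x i = 1)).card : ℤ)
      = 2 ^ (m - T.card) := by
  have h1 : ((Finset.univ.filter (fun x : Fin m → ZMod 2 => ∀ i ∈ T, x i = 1)).card : ℤ)
      = ∑ x : Fin m → ZMod 2, if ∀ i ∈ T, x i = 1 then 1 else 0 := by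
    rw [Finset.sum_boole]
  rw [h1]
  have h2 : ∀ x : Fin m → ZMod 2,
      (if ∀ i ∈ T, x i = 1 then (1:ℤ) else 0)
        = ∏ i : Fin m, (if i ∈ T then (if x i = 1 then (1:ℤ) else 0) else 1) := by
    intro x
    rw [← Finset.prod_filter_mul_prod_filter_not Finset.univ (· ∈ T)]
    have e1 : ∏ i ∈ Finset.univ.filter (· ∈ T),
        (if i ∈ T then (if x i = 1 then (1:ℤ) else 0) else 1)
        = ∏ i ∈ T, (if x i = 1 then (1:ℤ) else 0) := by
      rw [Finset.filter_mem_eq_inter, Finset.univ_inter]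
      exact Finset.prod_congr rfl (fun i hi => by simp [hi])
    have e2 : ∏ i ∈ Finset.univ.filter (¬ · ∈ T),
        (if i ∈ T then (if x i = 1 then (1:ℤ) else 0) else 1) = 1 := by
      apply Finset.prod_eq_one
      intro i hi
      simp only [Finset.mem_filter] at hi
      simp [hi.2]
    rw [e1, e2, mul_one, Finset.prod_boole]; convert rfl
  simp_rw [h2]
  rw [← Fintype.piFinset_univ, ← Finset.prod_univ_sum (fun _ => Finset.univ)
    (fun i v => if i ∈ T then (if v = 1 then (1:ℤ) else 0) else 1)]
  have h3 : ∀ i : Fin m, (∑ v : ZMod 2, if i ∈ T then (if v = 1 then (1:ℤ) else 0) else 1)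
      = if i ∈ T then 1 else 2 := by
    intro i; by_cases hi : i ∈ T <;> simp [hi]
  simp_rw [h3]
  rw [← Finset.prod_filter_mul_prod_filter_not Finset.univ (· ∈ T)]
  have e1 : ∏ i ∈ Finset.univ.filter (· ∈ T), (if i ∈ T then (1:ℤ) else 2) = 1 := by
    apply Finset.prod_eq_one; intro i hi
    simp only [Finset.mem_filter] at hi; simp [hi.2]
  have e2 : ∏ i ∈ Finset.univ.filter (¬ · ∈ T), (if i ∈ T then (1:ℤ) else 2)
      = 2 ^ (m - T.card) := by
    rw [Finset.prod_congr rfl (fun i hi => by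
      simp only [Finset.mem_filter] at hi; simp [hi.2] : ∀ i ∈ Finset.univ.filter (¬ · ∈ T),
        (if i ∈ T then (1:ℤ) else 2) = 2), Finset.prod_const]
    congr 1
    rw [Finset.filter_not, Finset.filter_mem_eq_inter, Finset.univ_inter,
      Finset.card_sdiff_of_subset (Finset.subset_univ T), Finset.card_univ, Fintype.card_fin]
  rw [e1, e2, one_mul]

/-- The inclusion–exclusion formula for the signed sum. -/
lemma RMmain1 {m : ℕ} (f a : (Fin m → ZMod 2) → ZMod 2)
    (hf : ∀ x, f x = ∑ d : Fin m → ZMod 2,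
      a d * ∏ i ∈ Finset.univ.filter (fun i => d i = 1), x i) :
    (2:ℤ)^m - 2 * (Finset.univ.filter (fun x : Fin m → ZMod 2 => f x = 1)).card
      = ∑ S ∈ (Finset.univ.filter (fun d : Fin m → ZMod 2 => a d = 1)).powerset,
          (-2:ℤ)^S.card
            * 2^(m - (S.biUnion (fun d => Finset.univ.filter (fun i => d i = 1))).card) := by
  set D : (Fin m → ZMod 2) → Finset (Fin m) :=
    fun d => Finset.univ.filter (fun i => d i = 1) with hD
  set supp : Finset (Fin m → ZMod 2) := Finset.univ.filter (fun d => a d = 1) with hsupp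
  have step1 : (2:ℤ)^m - 2 * (Finset.univ.filter (fun x : Fin m → ZMod 2 => f x = 1)).card
      = ∑ x : Fin m → ZMod 2, ((-1:ℤ))^((f x).val) := by
    have e : ∀ x : Fin m → ZMod 2, ((-1:ℤ))^((f x).val)
        = 1 - 2 * (if f x = 1 then (1:ℤ) else 0) := by
      intro x
      rcases RMzmod2_cases (f x) with h | h <;> rw [h] <;> decide
    simp_rw [e]
    rw [Finset.sum_sub_distrib, ← Finset.mul_sum, Finset.sum_boole, Finset.sum_const,
      Finset.card_univ]
    simp [Fintype.card_fun]
  rw [step1]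
  have step2 : ∀ x : Fin m → ZMod 2, f x = ∑ d ∈ supp, ∏ i ∈ D d, x i := by
    intro x
    rw [hf x]
    rw [← Finset.sum_subset (Finset.subset_univ supp)
      (fun d _ hd => by
        have : a d = 0 := by
          rcases RMzmod2_cases (a d) with h | h
          · exact h
          · exact absurd (Finset.mem_filter.2 ⟨Finset.mem_univ d, h⟩) hd
        rw [this, zero_mul])]
    refine Finset.sum_congr rfl (fun d hd => ?_)
    rw [(Finset.mem_filter.1 hd).2, one_mul]
  have step34 : ∀ x : Fin m → ZMod 2, ((-1:ℤ))^((f x).val)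
      = ∏ d ∈ supp, ((-2:ℤ) * (if ∀ i ∈ D d, x i = 1 then 1 else 0) + 1) := by
    intro x
    rw [step2 x, RMsign_sum]
    refine Finset.prod_congr rfl (fun d _ => ?_)
    by_cases h : ∀ i ∈ D d, x i = 1
    · rw [if_pos h, (RMprod_one_iff (D d) x).2 h]; decide
    · rw [if_neg h]
      have : (∏ i ∈ D d, x i) = 0 := by
        rcases RMzmod2_cases (∏ i ∈ D d, x i) with h0 | h1
        · exact h0
        · exact absurd ((RMprod_one_iff (D d) x).1 h1) h
      rw [this]; decide
  simp_rw [step34]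
  have step5 : ∀ x : Fin m → ZMod 2,
      (∏ d ∈ supp, ((-2:ℤ) * (if ∀ i ∈ D d, x i = 1 then 1 else 0) + 1))
      = ∑ S ∈ supp.powerset, (-2:ℤ)^S.card * (if ∀ i ∈ S.biUnion D, x i = 1 then 1 else 0) := by
    intro x
    rw [Finset.prod_add]
    refine Finset.sum_congr rfl (fun S hS => ?_)
    rw [Finset.prod_const_one, mul_one, Finset.prod_mul_distrib, Finset.prod_const]
    congr 1
    by_cases h : ∀ i ∈ S.biUnion D, x i = 1
    · rw [if_pos h]
      apply Finset.prod_eq_one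
      intro d hd
      rw [if_pos (fun i hid => h i (Finset.mem_biUnion.2 ⟨d, hd, hid⟩))]
    · rw [if_neg h]
      push_neg at h
      obtain ⟨i, hi, hxi⟩ := h
      obtain ⟨d, hd, hid⟩ := Finset.mem_biUnion.1 hi
      refine Finset.prod_eq_zero hd ?_
      rw [if_neg (fun hall => hxi (hall i hid))]
  simp_rw [step5]
  rw [Finset.sum_comm]
  refine Finset.sum_congr rfl (fun S hS => ?_)
  rw [← Finset.mul_sum, Finset.sum_boole, RMcard_ones]

lemma RMval_bound {m r k : ℕ} (hr : 2 ≤ r) (hm : m = r * k) (s u : ℕ)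
    (hs : 1 ≤ s) (hu1 : u ≤ m) (hu2 : u ≤ r * s)
    (hne : ¬ (s = k ∧ u = m)) : k ≤ s - 1 + (m - u) := by
  rcases le_or_gt s k with hsk | hsk
  · have hmul : r * s + r * (k - s) = r * k := by
      rw [← Nat.mul_add]; congr 1; omega
    have h2 : 2 * (k - s) ≤ r * (k - s) := Nat.mul_le_mul_right _ hr
    omega
  · omega

lemma RMwHam_card {m : ℕ} (d : Fin m → ZMod 2) :
    (Finset.univ.filter (fun i => d i = 1)).card = wHam d := by
  rw [Finset.card_filter, wHam]
  refine Finset.sum_congr rfl (fun i _ => ?_)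
  rcases RMzmod2_cases (d i) with h | h <;> rw [h] <;> decide

lemma RMchi_D {m : ℕ} (d : Fin m → ZMod 2) :
    (fun i => if i ∈ Finset.univ.filter (fun j => d j = 1) then (1:ZMod 2) else 0) = d := by
  funext i
  rcases RMzmod2_cases (d i) with h | h <;> simp [Finset.mem_filter, h]

lemma RMD_chi {m : ℕ} (B : Finset (Fin m)) :
    Finset.univ.filter (fun i => (if i ∈ B then (1:ZMod 2) else 0) = 1) = B := by
  ext i
  simp only [Finset.mem_filter, Finset.mem_univ, true_and]
  by_cases h : i ∈ B <;> simp [h]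

lemma RMstruct {m r k : ℕ} (hr : 2 ≤ r) (hm : m = r * k)
    (S : Finset (Fin m → ZMod 2)) (hcard : S.card = k)
    (hDle : ∀ d ∈ S, (Finset.univ.filter (fun i => d i = 1)).card ≤ r)
    (hcover : S.biUnion (fun d => Finset.univ.filter (fun i => d i = 1)) = Finset.univ) :
    (∀ d ∈ S, (Finset.univ.filter (fun i => d i = 1)).card = r) ∧
    (∀ d ∈ S, ∀ d' ∈ S, d ≠ d' →
      Disjoint (Finset.univ.filter (fun i => d i = 1))
        (Finset.univ.filter (fun i => d' i = 1))) := by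
  set D : (Fin m → ZMod 2) → Finset (Fin m) :=
    fun d => Finset.univ.filter (fun i => d i = 1) with hD
  have hdisj : ∀ d ∈ S, ∀ d' ∈ S, d ≠ d' → Disjoint (D d) (D d') := by
    intro d hd d' hd' hne
    rw [Finset.disjoint_left]
    intro i hid hid'
    have hk1 : 1 ≤ k := by
      rw [← hcard]; exact Finset.card_pos.2 ⟨d, hd⟩
    have hsub : Finset.univ ⊆ ((S.erase d).biUnion D) ∪ ((D d).erase i) := by
      intro j _
      have : j ∈ S.biUnion D := by rw [hcover]; exact Finset.mem_univ j
      obtain ⟨e, he, hje⟩ := Finset.mem_biUnion.1 this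
      rcases eq_or_ne e d with rfl | hed
      · rcases eq_or_ne j i with rfl | hji
        · exact Finset.mem_union_left _ (Finset.mem_biUnion.2
            ⟨d', Finset.mem_erase.2 ⟨fun h => hne h.symm, hd'⟩, hid'⟩)
        · exact Finset.mem_union_right _ (Finset.mem_erase.2 ⟨hji, hje⟩)
      · exact Finset.mem_union_left _ (Finset.mem_biUnion.2
          ⟨e, Finset.mem_erase.2 ⟨hed, he⟩, hje⟩)
    have h1 : m ≤ ((S.erase d).biUnion D).card + ((D d).erase i).card := by
      calc m = (Finset.univ : Finset (Fin m)).card := by simp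
      _ ≤ (((S.erase d).biUnion D) ∪ ((D d).erase i)).card := Finset.card_le_card hsub
      _ ≤ _ := Finset.card_union_le _ _
    have h2 : ((S.erase d).biUnion D).card ≤ (k - 1) * r := by
      calc ((S.erase d).biUnion D).card ≤ ∑ e ∈ S.erase d, (D e).card :=
          Finset.card_biUnion_le
      _ ≤ (S.erase d).card • r := Finset.sum_le_card_nsmul _ _ r
          (fun e he => hDle e (Finset.mem_of_mem_erase he))
      _ = (k - 1) * r := by rw [smul_eq_mul, Finset.card_erase_of_mem hd, hcard]
    have h3 : ((D d).erase i).card ≤ r - 1 := by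
      rw [Finset.card_erase_of_mem hid]
      exact Nat.sub_le_sub_right (hDle d hd) 1
    have hsubone : (k - 1) * r = k * r - r := Nat.sub_one_mul k r
    have hrk : r ≤ k * r := Nat.le_mul_of_pos_left r (by omega)
    have hm' : m = k * r := by rw [hm, Nat.mul_comm]
    omega
  refine ⟨?_, hdisj⟩
  have hsum : ∑ d ∈ S, (D d).card = m := by
    rw [← Finset.card_biUnion hdisj, hcover, Finset.card_univ, Fintype.card_fin]
  intro d hd
  by_contra hlt
  have hlt' : (D d).card < r := lt_of_le_of_ne (hDle d hd) hlt
  have : ∑ e ∈ S, (D e).card < ∑ _e ∈ S, r :=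
    Finset.sum_lt_sum (fun e he => hDle e he) ⟨d, hd, hlt'⟩
  rw [hsum, Finset.sum_const, smul_eq_mul, hcard] at this
  have hm2 : m = k * r := by rw [hm, Nat.mul_comm]
  omega

lemma RMQval {m r : ℕ} (a : (Fin m → ZMod 2) → ZMod 2) :
    (Qcoef m r a).val
      = (Finset.univ.filter (fun π : Finset (Finset (Fin m)) =>
          IsRPartition m r π ∧
            ∀ B ∈ π, a (fun i => if i ∈ B then (1:ZMod 2) else 0) = 1)).card % 2 := by
  have h : Qcoef m r a
      = ((Finset.univ.filter (fun π : Finset (Finset (Fin m)) =>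
          IsRPartition m r π ∧
            ∀ B ∈ π, a (fun i => if i ∈ B then (1:ZMod 2) else 0) = 1)).card : ZMod 2) := by
    rw [Qcoef, ← Finset.sum_boole]
    refine Finset.sum_congr rfl (fun π _ => ?_)
    by_cases h1 : IsRPartition m r π
    · rw [if_pos h1]
      by_cases h2 : ∀ B ∈ π, a (fun i => if i ∈ B then (1:ZMod 2) else 0) = 1
      · rw [if_pos ⟨h1, h2⟩, Finset.prod_eq_one h2]
      · rw [if_neg (fun hc => h2 hc.2)]
        have : ∃ B ∈ π, a (fun i => if i ∈ B then (1:ZMod 2) else 0) = 0 := by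
          push_neg at h2
          obtain ⟨B, hB, hne⟩ := h2
          rcases RMzmod2_cases (a (fun i => if i ∈ B then (1:ZMod 2) else 0)) with h0 | h1'
          · exact ⟨B, hB, h0⟩
          · exact absurd h1' hne
        obtain ⟨B, hB, h0⟩ := this
        exact Finset.prod_eq_zero hB h0
    · rw [if_neg h1, if_neg (fun hc => h1 hc.1)]
  rw [h, ZMod.val_natCast]

lemma RMcard_eq {m r k : ℕ} (hr : 2 ≤ r) (hm : m = r * k)
    (a : (Fin m → ZMod 2) → ZMod 2)
    (hdeg : ∀ d : Fin m → ZMod 2, r < wHam d → a d = 0) :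
    (((Finset.univ.filter (fun d : Fin m → ZMod 2 => a d = 1)).powerset.filter
        (fun S => S.card = k ∧
          S.biUnion (fun d => Finset.univ.filter (fun i => d i = 1)) = Finset.univ)).card)
      = (Finset.univ.filter (fun π : Finset (Finset (Fin m)) =>
          IsRPartition m r π ∧
            ∀ B ∈ π, a (fun i => if i ∈ B then (1:ZMod 2) else 0) = 1)).card := by
  set D : (Fin m → ZMod 2) → Finset (Fin m) :=
    fun d => Finset.univ.filter (fun i => d i = 1) with hD
  set χ : Finset (Fin m) → (Fin m → ZMod 2) :=
    fun B i => if i ∈ B then (1:ZMod 2) else 0 with hχ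
  have hchiD : ∀ d : Fin m → ZMod 2, χ (D d) = d := fun d => RMchi_D d
  have hDchi : ∀ B : Finset (Fin m), D (χ B) = B := fun B => RMD_chi B
  refine Finset.card_bij' (fun S _ => S.image D) (fun π _ => π.image χ) ?hi ?hj ?li ?ri
  case hi =>
    intro S hS
    rw [Finset.mem_filter] at hS
    obtain ⟨hSpow, hScard, hScov⟩ := hS
    rw [Finset.mem_powerset] at hSpow
    have hsupp : ∀ d ∈ S, a d = 1 := fun d hd =>
      (Finset.mem_filter.1 (hSpow hd)).2
    have hDle : ∀ d ∈ S, (D d).card ≤ r := by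
      intro d hd
      rw [hD, RMwHam_card]
      by_contra hgt
      have h0 := hdeg d (by omega)
      have h1 := hsupp d hd
      rw [h0] at h1
      exact absurd h1 (by decide)
    obtain ⟨hsize, hdisj⟩ := RMstruct hr hm S hScard hDle hScov
    rw [Finset.mem_filter]
    refine ⟨Finset.mem_univ _, ⟨?_, ?_, ?_⟩, ?_⟩
    · intro B hB
      obtain ⟨d, hd, rfl⟩ := Finset.mem_image.1 hB
      exact hsize d hd
    · intro B hB B' hB' hne
      obtain ⟨d, hd, rfl⟩ := Finset.mem_image.1 hB
      obtain ⟨d', hd', rfl⟩ := Finset.mem_image.1 hB'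
      exact hdisj d hd d' hd' (fun h => hne (by rw [h]))
    · intro i
      have : i ∈ S.biUnion D := by rw [hScov]; exact Finset.mem_univ i
      obtain ⟨d, hd, hid⟩ := Finset.mem_biUnion.1 this
      exact ⟨D d, Finset.mem_image_of_mem D hd, hid⟩
    · intro B hB
      obtain ⟨d, hd, rfl⟩ := Finset.mem_image.1 hB
      have : a (χ (D d)) = 1 := by rw [hchiD]; exact hsupp d hd
      exact this
  case hj =>
    intro π hπ
    rw [Finset.mem_filter] at hπ
    obtain ⟨_, ⟨hsize, hdisj, hcov⟩, hcoef⟩ := hπ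
    have hinj : Set.InjOn χ π := by
      intro B hB B' hB' h
      rw [← hDchi B, ← hDchi B', h]
    rw [Finset.mem_filter, Finset.mem_powerset]
    refine ⟨?_, ?_, ?_⟩
    · intro d hd
      obtain ⟨B, hB, rfl⟩ := Finset.mem_image.1 hd
      exact Finset.mem_filter.2 ⟨Finset.mem_univ _, hcoef B hB⟩
    · rw [Finset.card_image_of_injOn hinj]
      have hbu : π.biUnion id = Finset.univ :=
        Finset.eq_univ_of_forall (fun i => by
          obtain ⟨B, hB, hiB⟩ := hcov i
          exact Finset.mem_biUnion.2 ⟨B, hB, hiB⟩)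
      have hμ : m = π.card * r := by
        have h1 : (π.biUnion id).card = ∑ B ∈ π, B.card :=
          Finset.card_biUnion (fun B hB B' hB' hne => hdisj B hB B' hB' hne)
        rw [hbu, Finset.card_univ, Fintype.card_fin] at h1
        refine h1.trans ?_
        calc ∑ B ∈ π, B.card = ∑ _B ∈ π, r := Finset.sum_congr rfl hsize
        _ = π.card * r := by rw [Finset.sum_const, smul_eq_mul]
      have : k * r = π.card * r := by rw [← hμ, hm, Nat.mul_comm]
      exact (Nat.eq_of_mul_eq_mul_right (by omega) this).symm
    · apply Finset.eq_univ_of_forall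
      intro i
      obtain ⟨B, hB, hiB⟩ := hcov i
      refine Finset.mem_biUnion.2 ⟨χ B, Finset.mem_image_of_mem χ hB, ?_⟩
      rw [hDchi B]
      exact hiB
  case li =>
    intro S hS
    show (S.image D).image χ = S
    rw [Finset.image_image]
    have h : (χ ∘ D) = id := funext hchiD
    rw [h, Finset.image_id]
  case ri =>
    intro π hπ
    show (π.image χ).image D = π
    rw [Finset.image_image]
    have h : (D ∘ χ) = id := funext hDchi
    rw [h, Finset.image_id]

/-- Residue-weight theorem for Reed–Muller codes: if `f` has degree at most `r`
(with `r ∣ m`, `2 ≤ r ≤ m/2`), then the number of ones of `f` satisfies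
`|{x : f(x) = 1}| ≡ 2^{m/r − 1} Q̂(f) (mod 2^{m/r})`. -/
theorem reed_muller_weight_residue (m r : ℕ) (hr : 2 ≤ r) (hrm : r ∣ m)
    (hr2 : 2 * r ≤ m)
    (f : (Fin m → ZMod 2) → ZMod 2)
    (a : (Fin m → ZMod 2) → ZMod 2)
    (hf : ∀ x, f x = ∑ d : Fin m → ZMod 2,
      a d * ∏ i ∈ Finset.univ.filter (fun i => d i = 1), x i)
    (hdeg : ∀ d : Fin m → ZMod 2, r < wHam d → a d = 0) :
    Nat.ModEq (2 ^ (m / r))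
      (Finset.univ.filter (fun x : Fin m → ZMod 2 => f x = 1)).card
      (2 ^ (m / r - 1) * (Qcoef m r a).val) := by
  have hmain := RMmain1 f a hf
  set k := m / r with hk
  have hm : m = r * k := (Nat.mul_div_cancel' hrm).symm
  have hrpos : 0 < r := lt_of_lt_of_le two_pos hr
  have hk2 : 2 ≤ k := by
    have h1 : r * 2 ≤ r * k := by rw [← hm, Nat.mul_comm r 2]; exact hr2
    exact Nat.le_of_mul_le_mul_left h1 hrpos
  set D : (Fin m → ZMod 2) → Finset (Fin m) :=
    fun d => Finset.univ.filter (fun i => d i = 1) with hD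
  set supp : Finset (Fin m → ZMod 2) :=
    Finset.univ.filter (fun d : Fin m → ZMod 2 => a d = 1) with hsupp
  set N : ℕ := (Finset.univ.filter (fun x : Fin m → ZMod 2 => f x = 1)).card with hNdef
  -- split off the empty set
  have hempty : (∅ : Finset (Fin m → ZMod 2)) ∈ supp.powerset := Finset.empty_mem_powerset _
  have hsplit := (Finset.add_sum_erase supp.powerset
    (fun S => (-2:ℤ)^S.card * 2^(m - (S.biUnion D).card)) hempty).symm
  have hempty_val : (-2:ℤ)^(∅ : Finset (Fin m → ZMod 2)).card
      * 2^(m - ((∅ : Finset (Fin m → ZMod 2)).biUnion D).card) = 2^m := by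
    simp
  rw [hempty_val] at hsplit
  -- N as a signed sum
  have hNeq : (N:ℤ) = ∑ S ∈ supp.powerset.erase ∅,
      (-1:ℤ)^(S.card + 1) * 2^(S.card - 1 + (m - (S.biUnion D).card)) := by
    apply mul_left_cancel₀ (two_ne_zero (α := ℤ))
    have h2N : (2:ℤ) * N = - ∑ S ∈ supp.powerset.erase ∅,
        (-2:ℤ)^S.card * 2^(m - (S.biUnion D).card) := by
      rw [hsplit] at hmain
      linarith
    rw [h2N, Finset.mul_sum, ← Finset.sum_neg_distrib]
    refine Finset.sum_congr rfl (fun S hS => ?_)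
    have hs1 : 1 ≤ S.card := by
      rcases Finset.mem_erase.1 hS with ⟨hne, _⟩
      exact Finset.card_pos.2 (Finset.nonempty_of_ne_empty hne)
    have e1 : (2:ℤ) * ((-1)^(S.card+1) * 2^(S.card - 1 + (m - (S.biUnion D).card)))
        = (-1)^(S.card+1) * 2^(S.card + (m - (S.biUnion D).card)) := by
      rw [show S.card + (m - (S.biUnion D).card)
        = (S.card - 1 + (m - (S.biUnion D).card)) + 1 from by omega, pow_succ]
      ring
    have e2 : -((-2:ℤ)^S.card * 2^(m - (S.biUnion D).card))
        = (-1)^(S.card+1) * 2^(S.card + (m - (S.biUnion D).card)) := by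
      rw [neg_pow, pow_succ, pow_add]
      ring
    rw [e1, ← e2]
  -- the modular statement over ℤ
  set P : Finset (Fin m → ZMod 2) → Prop :=
    fun S => S.card = k ∧ S.biUnion D = Finset.univ with hP
  have hgoodcard : ((supp.powerset.erase ∅).filter P).card
      = (supp.powerset.filter P).card := by
    congr 1
    ext S
    simp only [Finset.mem_filter, Finset.mem_erase]
    constructor
    · rintro ⟨⟨_, h1⟩, h2⟩; exact ⟨h1, h2⟩
    · rintro ⟨h1, h2⟩
      refine ⟨⟨?_, h1⟩, h2⟩
      rintro rfl
      rw [hP] at h2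
      simp only [Finset.card_empty] at h2
      omega
  have hDle : ∀ d ∈ supp, (D d).card ≤ r := by
    intro d hd
    rw [hD, RMwHam_card]
    by_contra hgt
    have h0 := hdeg d (by omega)
    have h1 := (Finset.mem_filter.1 hd).2
    rw [h0] at h1
    exact absurd h1 (by decide)
  have key : (2:ℤ)^k ∣ (2^(k-1) * ((Qcoef m r a).val : ℤ) - N) := by
    rw [hNeq, ← Finset.sum_filter_add_sum_filter_not (supp.powerset.erase ∅) P
      (fun S => (-1:ℤ)^(S.card + 1) * 2^(S.card - 1 + (m - (S.biUnion D).card)))]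
    have hBad : (2:ℤ)^k ∣ ∑ S ∈ (supp.powerset.erase ∅).filter (fun S => ¬ P S),
        (-1:ℤ)^(S.card + 1) * 2^(S.card - 1 + (m - (S.biUnion D).card)) := by
      refine Finset.dvd_sum (fun S hS => ?_)
      rw [Finset.mem_filter, Finset.mem_erase, Finset.mem_powerset] at hS
      obtain ⟨⟨hne, hsub⟩, hnp⟩ := hS
      have hs1 : 1 ≤ S.card := Finset.card_pos.2 (Finset.nonempty_of_ne_empty hne)
      have hu1 : (S.biUnion D).card ≤ m := by
        calc (S.biUnion D).card ≤ (Finset.univ : Finset (Fin m)).card :=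
            Finset.card_le_card (Finset.subset_univ _)
        _ = m := by simp
      have hu2 : (S.biUnion D).card ≤ r * S.card := by
        calc (S.biUnion D).card ≤ ∑ d ∈ S, (D d).card := Finset.card_biUnion_le
        _ ≤ S.card • r := Finset.sum_le_card_nsmul _ _ r (fun d hd => hDle d (hsub hd))
        _ = r * S.card := by rw [smul_eq_mul, Nat.mul_comm]
      have hne2 : ¬ (S.card = k ∧ (S.biUnion D).card = m) := by
        intro ⟨hc, hu⟩
        apply hnp
        refine ⟨hc, ?_⟩
        apply Finset.eq_univ_of_card
        rw [hu, Fintype.card_fin]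
      have hexp := RMval_bound hr hm S.card (S.biUnion D).card hs1 hu1 hu2 hne2
      exact Dvd.dvd.mul_left (pow_dvd_pow 2 hexp) _
    have hterm : ∀ S ∈ (supp.powerset.erase ∅).filter P,
        (-1:ℤ)^(S.card + 1) * 2^(S.card - 1 + (m - (S.biUnion D).card))
          = (-1:ℤ)^(k+1) * 2^(k-1) := by
      intro S hS
      rw [Finset.mem_filter] at hS
      obtain ⟨_, hck, hcu⟩ := hS
      rw [hck, hcu]
      congr 2
      rw [Finset.card_univ, Fintype.card_fin]
      omega
    have hGood : ∑ S ∈ (supp.powerset.erase ∅).filter P,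
        (-1:ℤ)^(S.card + 1) * 2^(S.card - 1 + (m - (S.biUnion D).card))
        = ((supp.powerset.filter P).card : ℤ) * ((-1:ℤ)^(k+1) * 2^(k-1)) := by
      rw [Finset.sum_congr rfl hterm, Finset.sum_const, hgoodcard, nsmul_eq_mul]
    rw [hGood]
    -- now pure arithmetic
    set c : ℕ := (supp.powerset.filter P).card with hc
    have hQv : ((Qcoef m r a).val : ℤ) = ((c % 2 : ℕ) : ℤ) := by
      rw [RMQval a, ← RMcard_eq hr hm a hdeg]
    rw [hQv]
    have hcqb : c = 2 * (c / 2) + c % 2 := (Nat.div_add_mod c 2).symm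
    set q : ℕ := c / 2
    set b : ℕ := c % 2
    have hcZ : (c:ℤ) = 2 * q + b := by exact_mod_cast hcqb
    have hpow : (2:ℤ)^k = 2 * 2^(k-1) := by
      rw [← pow_succ']
      congr 1
      omega
    have hsub : (2:ℤ)^(k-1) * ((c % 2 : ℕ) : ℤ)
        - (((c:ℤ)) * ((-1:ℤ)^(k+1) * 2^(k-1))
          + ∑ S ∈ (supp.powerset.erase ∅).filter (fun S => ¬ P S),
            (-1:ℤ)^(S.card + 1) * 2^(S.card - 1 + (m - (S.biUnion D).card)))
        = ((2:ℤ)^(k-1) * ((c % 2 : ℕ) : ℤ) - (c:ℤ) * ((-1:ℤ)^(k+1) * 2^(k-1)))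
          - ∑ S ∈ (supp.powerset.erase ∅).filter (fun S => ¬ P S),
            (-1:ℤ)^(S.card + 1) * 2^(S.card - 1 + (m - (S.biUnion D).card)) := by
      ring
    rw [hsub]
    refine dvd_sub ?_ hBad
    rcases neg_one_pow_eq_or ℤ (k+1) with h | h <;> rw [h]
    · exact ⟨-q, by linear_combination (-(2:ℤ)^(k-1)) * hcZ + (q:ℤ) * hpow⟩
    · exact ⟨q + b, by linear_combination ((2:ℤ)^(k-1)) * hcZ - ((q:ℤ)+(b:ℤ)) * hpow⟩
  rw [Nat.modEq_iff_dvd]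
  push_cast
  exact key

end
end
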